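/- Let L ⊆ V_ℂ ⊕ V*_ℂ be a complex maximally isotropic subspace (for the complexified natural pairing) with L ∩ L̄ = 0, where the bar is complex conjugation. Then dim_ℝ V is even. -/

import Mathlib

/-!
Let `b` be a basis of `L`. Since `L ∩ L̄ = 0`, the vectors `b, b̄` form a basis of
`V_ℂ ⊕ V*_ℂ`. Compare the Gram matrices of the Hermitian form `h(p, q) = 2 G(p, q̄)` in two
bases: in standard coordinates it is `[[0, 1], [1, 0]]`, of determinant `(-1)ⁿ`; in the basis
`(b, b̄)` isotropy of `L` makes it block diagonal `diag(A, Ā)`, of determinant `|det A|² ≥ 0`.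
As the change of basis `P` is invertible, `(-1)ⁿ |det P|² = |det A|²` forces `n` to be even.
-/

open scoped BigOperators

/-- The complex-bilinear extension of the natural pairing on `V_ℂ ⊕ V*_ℂ`,
with `V_ℂ = ℂⁿ` (the complexification of the `n`-dimensional real space `V`)
and the dual identified with `ℂⁿ` via coordinates:
`G((x,a),(y,b)) = ½(Σ b_i x_i + Σ a_i y_i)`. -/
noncomputable def cPairing (n : ℕ) (p q : (Fin n → ℂ) × (Fin n → ℂ)) : ℂ :=
  (1 / 2) * (∑ i, q.2 i * p.1 i + ∑ i, p.2 i * q.1 i)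

/-- The complex conjugation induced by the real structure. -/
def cConj (n : ℕ) (p : (Fin n → ℂ) × (Fin n → ℂ)) :
    (Fin n → ℂ) × (Fin n → ℂ) :=
  (fun i => starRingEnd ℂ (p.1 i), fun i => starRingEnd ℂ (p.2 i))

open Matrix Submodule Set

theorem Matrix.det_fromBlocks_zero_one_one_zero {m R : Type*} [Fintype m] [DecidableEq m]
    [CommRing R] :
    (fromBlocks 0 1 1 0 : Matrix (m ⊕ m) (m ⊕ m) R).det = (-1) ^ Fintype.card m := by
  have h : (fromBlocks 0 1 1 0 : Matrix (m ⊕ m) (m ⊕ m) R) * fromBlocks 1 0 1 1 =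
      fromBlocks 1 1 1 0 := by
    simp [fromBlocks_multiply]
  have := congrArg det h
  rw [det_mul, det_fromBlocks_zero₁₂, det_fromBlocks_one₁₁] at this
  simpa [det_neg] using this

theorem LinearIndependent.star_comp {ι R M : Type*} [CommRing R] [StarRing R] [AddCommGroup M]
    [Module R M] [StarAddMonoid M] [StarModule R M] {b : ι → M} (hb : LinearIndependent R b) :
    LinearIndependent R (star ∘ b) :=
  hb.map_of_injective_injectiveₛ (star : R → R) (starAddEquiv : M ≃+ M).toAddMonoidHom
    star_injective star_injective fun r m => by simp [star_smul]

theorem LinearIndependent.sumElim_star_comp {ι R M : Type*} [CommRing R] [StarRing R]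
    [AddCommGroup M] [Module R M] [StarAddMonoid M] [StarModule R M] {L : Submodule R M}
    (hL : ∀ p ∈ L, star p ∈ L → p = 0) {b : ι → M} (hb : LinearIndependent R b)
    (hbL : ∀ i, b i ∈ L) : LinearIndependent R (Sum.elim b (star ∘ b)) := by
  have hstar : span R (range (star ∘ b)) ≤ L.comap (starLinearEquiv R (A := M)).toLinearMap :=
    span_le.2 (range_subset_iff.2 fun i => by simpa using hbL i)
  refine hb.sum_type hb.star_comp (disjoint_def.2 fun p hp hp' => hL p ?_ ?_)
  · exact span_le.2 (range_subset_iff.2 hbL) hp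
  · simpa using hstar hp'

variable {n : ℕ} {ι : Type*}

theorem cPairing_star (p q : (Fin n → ℂ) × (Fin n → ℂ)) :
    cPairing n (star p) (star q) = star (cPairing n p q) := by
  simp [cPairing]

def coordMatrix (c : ι → (Fin n → ℂ) × (Fin n → ℂ)) : Matrix ι (Fin n ⊕ Fin n) ℂ :=
  Matrix.of fun k => Sum.elim (c k).1 (c k).2

theorem det_coordMatrix_ne_zero {c : Fin n ⊕ Fin n → (Fin n → ℂ) × (Fin n → ℂ)}
    (hc : LinearIndependent ℂ c) : (coordMatrix c).det ≠ 0 := by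
  have hrows : LinearIndependent ℂ (coordMatrix c).row :=
    hc.map' (LinearEquiv.sumArrowLequivProdArrow (Fin n) (Fin n) ℂ ℂ).symm.toLinearMap
      (LinearEquiv.ker _)
  exact ((isUnit_iff_isUnit_det _).1 (linearIndependent_rows_iff_isUnit.1 hrows)).ne_zero

noncomputable def hermitianGram (c : ι → (Fin n → ℂ) × (Fin n → ℂ)) : Matrix ι ι ℂ :=
  Matrix.of fun k l => 2 * cPairing n (c k) (star (c l))

theorem coordMatrix_mul_fromBlocks_mul_conjTranspose (c : ι → (Fin n → ℂ) × (Fin n → ℂ)) :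
    coordMatrix c * (fromBlocks 0 1 1 0 : Matrix (Fin n ⊕ Fin n) (Fin n ⊕ Fin n) ℂ) *
      (coordMatrix c)ᴴ = hermitianGram c := by
  ext k l
  simp [coordMatrix, hermitianGram, cPairing, mul_apply, Fintype.sum_sum_type, fromBlocks,
    one_apply, mul_comm, add_comm]

theorem hermitianGram_sumElim_star {b : Fin n → (Fin n → ℂ) × (Fin n → ℂ)}
    (hiso : ∀ i j, cPairing n (b i) (b j) = 0) :
    hermitianGram (Sum.elim b (star ∘ b)) =
      fromBlocks (hermitianGram b) 0 0 ((hermitianGram b).map star) := by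
  ext (k | k) (l | l)
  · simp [hermitianGram]
  · simp [hermitianGram, hiso]
  · simp [hermitianGram, hiso, cPairing_star]
  · simpa [hermitianGram, map_ofNat] using cPairing_star (b k) (star (b l))

theorem even_of_linearIndependent_sumElim_star {b : Fin n → (Fin n → ℂ) × (Fin n → ℂ)}
    (hiso : ∀ i j, cPairing n (b i) (b j) = 0)
    (hli : LinearIndependent ℂ (Sum.elim b (star ∘ b))) : Even n := by
  set P := coordMatrix (Sum.elim b (star ∘ b))
  set A := hermitianGram b
  have hdet : P.det * (-1) ^ n * star P.det = A.det * star A.det := by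
    have h := congrArg det <| (coordMatrix_mul_fromBlocks_mul_conjTranspose _).trans
      (hermitianGram_sumElim_star hiso)
    rwa [det_mul, det_mul, det_conjTranspose, det_fromBlocks_zero_one_one_zero, Fintype.card_fin,
      det_fromBlocks_zero₂₁, ← conjTranspose_transpose, det_transpose, det_conjTranspose] at h
  by_contra hodd
  rw [(Nat.not_even_iff_odd.1 hodd).neg_one_pow, mul_neg_one, neg_mul, Complex.star_def,
    Complex.mul_conj, Complex.mul_conj, neg_eq_iff_add_eq_zero] at hdet
  have hsum : Complex.normSq P.det + Complex.normSq A.det = 0 := by exact_mod_cast hdet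
  refine det_coordMatrix_ne_zero hli (Complex.normSq_eq_zero.1 ?_)
  linarith [Complex.normSq_nonneg A.det, Complex.normSq_nonneg P.det]

/-- If `L ⊆ V_ℂ ⊕ V*_ℂ` is a complex maximally isotropic subspace
(`dim_ℂ L = dim_ℝ V = n`) with `L ∩ L̄ = 0`, then `dim_ℝ V` is even. -/
theorem stmt16 (n : ℕ) (L : Submodule ℂ ((Fin n → ℂ) × (Fin n → ℂ)))
    (hiso : ∀ p ∈ L, ∀ q ∈ L, cPairing n p q = 0)
    (hrank : Module.finrank ℂ L = n)
    (hconj : ∀ p ∈ L, cConj n p ∈ L → p = 0) :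
    Even n := by
  let B := Module.finBasisOfFinrankEq ℂ L hrank
  -- `cConj n p` unfolds to `star p`, so `hconj` serves as the hypothesis on `star`.
  refine even_of_linearIndependent_sumElim_star (b := fun i => B i)
    (fun i j => hiso _ (B i).2 _ (B j).2) ?_
  exact (B.linearIndependent.map' L.subtype L.ker_subtype).sumElim_star_comp hconj
    fun i => (B i).2
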